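/- arXiv:2112.12032 — 7 statements merged into one kernel-verified Lean document; each statement's English description precedes it below -/
import Mathlib

section
/- Let p be prime and 1 < v < p-1 with p ≡ α (mod v) for some α ≠ 1. Then for any permutation π of {1,...,p-1}, the sequence π_v (viewed as a periodic circular sequence of length p-1 over Z_v) has least period exactly p-1. -/
open Finset

/-- Counting a `d`-periodic predicate over `range (k*d)`. -/
lemma aux_count_range_mul {Q : ℕ → Prop} [DecidablePred Q] {d : ℕ}
    (hQ : Function.Periodic Q d) (k : ℕ) :
    ((Finset.range (k * d)).filter Q).card = k * ((Finset.range d).filter Q).card := by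
  induction k with
  | zero => simp
  | succ k ih =>
    have hsplit : Finset.range ((k + 1) * d) =
        Finset.range (k * d) ∪ Finset.Ico (k * d) (k * d + d) := by
      rw [show (k + 1) * d = k * d + d by ring, Finset.range_eq_Ico,
        ← Finset.Ico_union_Ico_eq_Ico (Nat.zero_le (k * d)) (Nat.le_add_right _ d),
        ← Finset.range_eq_Ico]
    have hdisj : Disjoint ((Finset.range (k * d)).filter Q)
        ((Finset.Ico (k * d) (k * d + d)).filter Q) := by
      apply Finset.disjoint_filter_filter
      rw [Finset.range_eq_Ico]
      exact Finset.Ico_disjoint_Ico_consecutive 0 (k * d) (k * d + d)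
    rw [hsplit, Finset.filter_union, Finset.card_union_of_disjoint hdisj, ih,
      Nat.filter_Ico_card_eq_of_periodic (k * d) d Q hQ,
      ← Nat.count_eq_card_filter_range]
    ring

/-- If a function on `ℕ` admits period `N` and depends only on the residue mod `n`,
then it admits period `gcd N n`. -/
lemma aux_periodic_gcd {α : Type*} {G : ℕ → α} {N n : ℕ} (hn : 0 < n)
    (hN : ∀ i, G (i + N) = G i) (hmod : ∀ i, G i = G (i % n)) :
    ∀ i, G (i + Nat.gcd N n) = G i := by
  have hkN : ∀ i k, G (i + k * N) = G i := by
    intro i k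
    induction k with
    | zero => simp
    | succ k ih =>
      have : i + (k + 1) * N = (i + k * N) + N := by ring
      rw [this, hN, ih]
  set g := Nat.gcd N n with hg
  have key : (g : ℤ) = N * Nat.gcdA N n + n * Nat.gcdB N n := Nat.gcd_eq_gcd_ab N n
  set s : ℤ := Nat.gcdA N n with hs
  set a : ℕ := (s % n).toNat with hadef
  have hnz : (n : ℤ) ≠ 0 := by exact_mod_cast hn.ne'
  have ha : (a : ℤ) = s % n := Int.toNat_of_nonneg (Int.emod_nonneg s hnz)
  have hZ : (g : ℤ) % n = ((a * N : ℕ) : ℤ) % n := by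
    push_cast
    rw [key, Int.add_mul_emod_self_left, ha, mul_comm (s % (n : ℤ)) (N : ℤ),
      Int.mul_emod (N : ℤ) s n, Int.mul_emod (N : ℤ) (s % (n : ℤ)) n,
      Int.emod_emod_of_dvd s dvd_rfl]
  have hNat : g % n = (a * N) % n := by exact_mod_cast hZ
  intro i
  have hmix : (i + g) % n = (i + a * N) % n := by
    rw [Nat.add_mod i g n, hNat, ← Nat.add_mod]
  calc G (i + g) = G ((i + g) % n) := hmod _
    _ = G ((i + a * N) % n) := by rw [hmix]
    _ = G (i + a * N) := (hmod _).symm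
    _ = G i := hkN i a

/-- There are `n / v` numbers `i < n` with `(i+1) % v = 0`. -/
lemma aux_count_zero (n v : ℕ) :
    ((Finset.range n).filter (fun i => (i + 1) % v = 0)).card = n / v := by
  rw [show ((Finset.range n).filter (fun i => (i + 1) % v = 0)) =
      ((Finset.range n).filter (fun i => v ∣ i + 1)) from
    Finset.filter_congr (fun i _ => by simp [Nat.dvd_iff_mod_eq_zero])]
  exact Nat.card_multiples n v

/-- If `n % v ≠ 0` and `1 < v`, there are `n / v + 1` numbers `i < n` with `(i+1) % v = 1`. -/
lemma aux_count_one (n v : ℕ) (hv : 1 < v) (hr : n % v ≠ 0) :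
    ((Finset.range n).filter (fun i => (i + 1) % v = 1)).card = n / v + 1 := by
  have hv0 : 0 < v := by omega
  have hiff : ∀ i, ((i + 1) % v = 1) ↔ (v ∣ i) := by
    intro i
    constructor
    · intro h
      have hdm := Nat.div_add_mod (i + 1) v
      rw [h] at hdm
      exact ⟨(i + 1) / v, (Nat.add_right_cancel hdm).symm⟩
    · rintro ⟨c, rfl⟩
      have h1 : 1 % v = 1 := Nat.mod_eq_of_lt hv
      rw [Nat.add_mod, Nat.mul_mod_right, Nat.zero_add, h1, h1]
  rw [show ((Finset.range n).filter (fun i => (i + 1) % v = 1)) =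
      ((Finset.range n).filter (fun i => v ∣ i)) from
    Finset.filter_congr (fun i _ => by simp [hiff i])]
  have himg : (Finset.range n).filter (fun i => v ∣ i) =
      (Finset.range (n / v + 1)).image (· * v) := by
    ext x
    simp only [Finset.mem_filter, Finset.mem_range, Finset.mem_image]
    constructor
    · rintro ⟨hx, c, rfl⟩
      refine ⟨c, ?_, mul_comm c v⟩
      have hc : c = (v * c) / v := (Nat.mul_div_cancel_left c hv0).symm
      have h2 : (v * c) / v ≤ n / v := Nat.div_le_div_right (le_of_lt hx)
      exact Nat.lt_succ_of_le (le_trans (le_of_eq hc) h2)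
    · rintro ⟨k, hk, rfl⟩
      refine ⟨?_, dvd_mul_left v k⟩
      have hk' : k ≤ n / v := Nat.lt_succ_iff.mp hk
      have h1 : k * v ≤ (n / v) * v := Nat.mul_le_mul_right v hk'
      have h2 : (n / v) * v + n % v = n := by rw [mul_comm]; exact Nat.div_add_mod n v
      omega
  rw [himg, Finset.card_image_of_injective _
    (fun a b h => Nat.eq_of_mul_eq_mul_right hv0 h), Finset.card_range]

/-- If `p ≡ α (mod v)` with `α ≠ 1`, the reduced sequence of any permutation of
`{1,…,p-1}` has least period exactly `p-1` as a circular sequence. -/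
theorem stmt_2 (p v : ℕ) (hp : p.Prime) (hv1 : 1 < v) (hv2 : v < p - 1)
    (hα : p % v ≠ 1) (π : Equiv.Perm (Fin (p - 1))) :
    (∀ i : ℕ,
        ((π ⟨(i + (p - 1)) % (p - 1), Nat.mod_lt _ (by omega)⟩).val + 1) % v =
          ((π ⟨i % (p - 1), Nat.mod_lt _ (by omega)⟩).val + 1) % v) ∧
    (∀ N : ℕ, 0 < N →
        (∀ i : ℕ,
          ((π ⟨(i + N) % (p - 1), Nat.mod_lt _ (by omega)⟩).val + 1) % v =
            ((π ⟨i % (p - 1), Nat.mod_lt _ (by omega)⟩).val + 1) % v) →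
        p - 1 ≤ N) := by
  have hp2 : 2 ≤ p := hp.two_le
  have hn3 : 2 < p - 1 := by omega
  have hn0 : 0 < p - 1 := by omega
  constructor
  · intro i
    have h : (i + (p - 1)) % (p - 1) = i % (p - 1) := Nat.add_mod_right i (p - 1)
    simp only [h]
  · intro N hN0 hper
    -- the reduced sequence, extended periodically to ℕ
    set G : ℕ → ℕ :=
      fun i => ((π ⟨i % (p - 1), Nat.mod_lt _ (by omega)⟩).val + 1) % v with hG
    have hmod : ∀ i, G i = G (i % (p - 1)) := by
      intro i
      simp only [hG, Nat.mod_mod_of_dvd i (dvd_refl (p - 1))]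
    have hNper : ∀ i, G (i + N) = G i := fun i => hper i
    set g := Nat.gcd N (p - 1) with hgdef
    have hgdvd : g ∣ (p - 1) := Nat.gcd_dvd_right N (p - 1)
    have hg0 : 0 < g := Nat.gcd_pos_of_pos_left (p - 1) hN0
    have hgper : ∀ i, G (i + g) = G i := aux_periodic_gcd hn0 hNper hmod
    set m := (p - 1) / g with hm
    have hmg : m * g = p - 1 := Nat.div_mul_cancel hgdvd
    -- counting fibers of G over a full period
    have hdivides : ∀ a : ℕ,
        m ∣ ((Finset.range (p - 1)).filter (fun i => G i = a)).card := by
      intro a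
      have hQper : Function.Periodic (fun i => G i = a) g := by
        intro i
        simp only [hgper i]
      have := aux_count_range_mul hQper m
      rw [hmg] at this
      exact ⟨_, this⟩
    -- the fiber of G over a coincides with the fiber of the identity permutation
    have hfiber : ∀ a : ℕ, ((Finset.range (p - 1)).filter (fun i => G i = a)).card =
        ((Finset.range (p - 1)).filter (fun i => (i + 1) % v = a)).card := by
      intro a
      have e1 : (Finset.range (p - 1)).filter (fun i => G i = a) =
          ((Finset.univ : Finset (Fin (p - 1))).filter
            (fun j : Fin (p - 1) => ((π j).val + 1) % v = a)).map Fin.valEmbedding := by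
        ext x
        simp only [Finset.mem_filter, Finset.mem_range, Finset.mem_map, Finset.mem_univ,
          true_and, Fin.valEmbedding_apply]
        constructor
        · rintro ⟨hx, hGx⟩
          refine ⟨⟨x, hx⟩, ?_, rfl⟩
          simpa only [hG, Nat.mod_eq_of_lt hx] using hGx
        · rintro ⟨j, hj, rfl⟩
          refine ⟨j.isLt, ?_⟩
          simpa only [hG, Nat.mod_eq_of_lt j.isLt] using hj
      have e2 : (Finset.univ : Finset (Fin (p - 1))).filter
            (fun j : Fin (p - 1) => ((π j).val + 1) % v = a) =
          ((Finset.univ : Finset (Fin (p - 1))).filter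
            (fun j : Fin (p - 1) => (j.val + 1) % v = a)).map π.symm.toEmbedding := by
        ext x
        simp only [Finset.mem_filter, Finset.mem_univ, true_and, Finset.mem_map,
          Equiv.coe_toEmbedding]
        constructor
        · intro h
          exact ⟨π x, h, Equiv.symm_apply_apply π x⟩
        · rintro ⟨y, hy, rfl⟩
          simpa using hy
      have e3 : (Finset.range (p - 1)).filter (fun i => (i + 1) % v = a) =
          ((Finset.univ : Finset (Fin (p - 1))).filter
            (fun j : Fin (p - 1) => (j.val + 1) % v = a)).map Fin.valEmbedding := by
        ext x
        simp only [Finset.mem_filter, Finset.mem_range, Finset.mem_map, Finset.mem_univ,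
          true_and, Fin.valEmbedding_apply]
        constructor
        · rintro ⟨hx, hGx⟩
          exact ⟨⟨x, hx⟩, hGx, rfl⟩
        · rintro ⟨j, hj, rfl⟩
          exact ⟨j.isLt, hj⟩
      rw [e1, e2, e3, Finset.card_map, Finset.card_map, Finset.card_map]
    -- (p - 1) % v ≠ 0
    have hrnz : (p - 1) % v ≠ 0 := by
      intro h0
      apply hα
      have hpn : p = (p - 1) + 1 := by omega
      rw [hpn, Nat.add_mod, h0, Nat.zero_add, Nat.mod_mod_of_dvd 1 (dvd_refl v),
        Nat.mod_eq_of_lt hv1]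
    -- the two counts
    have hc0 : ((Finset.range (p - 1)).filter (fun i => (i + 1) % v = 0)).card =
        (p - 1) / v := aux_count_zero (p - 1) v
    have hc1 : ((Finset.range (p - 1)).filter (fun i => (i + 1) % v = 1)).card =
        (p - 1) / v + 1 := aux_count_one (p - 1) v hv1 hrnz
    have hd0 : m ∣ (p - 1) / v := by
      have := hdivides 0
      rwa [hfiber 0, hc0] at this
    have hd1 : m ∣ (p - 1) / v + 1 := by
      have := hdivides 1
      rwa [hfiber 1, hc1] at this
    have hm1 : m ∣ 1 := by
      have := Nat.dvd_sub hd1 hd0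
      simpa using this
    have hmeq : m = 1 := Nat.dvd_one.mp hm1
    have hgn : g = p - 1 := by
      rw [hmeq, one_mul] at hmg
      exact hmg
    have hnN : (p - 1) ∣ N := hgn ▸ Nat.gcd_dvd_left N (p - 1)
    exact Nat.le_of_dvd hN0 hnN
end

section
/- For integers v ≥ 2 and k ≥ 0, the sum Σ_{i=0}^{k} (vi)!/(i!)^v is at most (v(k+1))!/((k+1)!)^v. -/
/-!
Writing `M n = (v n)! / (n!)^v`, one has `M (n + 1) / M n = ∏_{j=1}^{v} (v n + j) / (n + 1)`,
a product of factors that are all at least `1`, the last one being `v ≥ 2`. Hence `M` at least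
doubles at each step, and a sequence that doubles dominates the sum of all its earlier terms.
-/

open Finset Nat

theorem sum_range_add_le_of_add_self_le {M : Type*} [AddCommMonoid M] [PartialOrder M]
    [IsOrderedAddMonoid M] {a : ℕ → M} (ha : ∀ n, a n + a n ≤ a (n + 1)) (n : ℕ) :
    ∑ i ∈ range n, a i + a 0 ≤ a n := by
  induction n with
  | zero => simp
  | succ n ih =>
    calc ∑ i ∈ range (n + 1), a i + a 0 = (∑ i ∈ range n, a i + a 0) + a n := by
          rw [sum_range_succ, add_right_comm]
      _ ≤ a n + a n := add_le_add_left ih _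
      _ ≤ a (n + 1) := ha n

theorem Nat.factorial_pow_dvd_factorial_mul (v n : ℕ) : n ! ^ v ∣ (v * n)! := by
  simpa [mul_comm] using Nat.prod_factorial_dvd_factorial_sum (univ : Finset (Fin v)) fun _ => n

theorem Nat.two_mul_factorial_mul_succ_pow_le {v : ℕ} (hv : 2 ≤ v) (n : ℕ) :
    2 * (v * n)! * (n + 1) ^ v ≤ (v * (n + 1))! := by
  obtain ⟨w, rfl⟩ : ∃ w, v = w + 1 := ⟨v - 1, by omega⟩
  have hsplit : (w + 1) * (n + 1) = ((w + 1) * n + w) + 1 := by ring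
  rw [hsplit, Nat.factorial_succ]
  calc 2 * ((w + 1) * n)! * (n + 1) ^ (w + 1)
      = (2 * (n + 1)) * (((w + 1) * n)! * (n + 1) ^ w) := by ring
    _ ≤ ((w + 1) * n + w + 1) * (((w + 1) * n)! * ((w + 1) * n + 1) ^ w) := by
        gcongr
        · nlinarith
        · nlinarith
    _ ≤ ((w + 1) * n + w + 1) * ((w + 1) * n + w)! := by
        gcongr
        exact Nat.factorial_mul_pow_le_factorial

theorem Nat.two_mul_centralMultinomial_le_succ {v : ℕ} (hv : 2 ≤ v) (n : ℕ) :
    2 * ((v * n)! / n ! ^ v) ≤ (v * (n + 1))! / (n + 1)! ^ v := by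
  rw [Nat.le_div_iff_mul_le (by positivity), Nat.factorial_succ, mul_pow]
  calc 2 * ((v * n)! / n ! ^ v) * ((n + 1) ^ v * n ! ^ v)
      = 2 * ((v * n)! / n ! ^ v * n ! ^ v) * (n + 1) ^ v := by ring
    _ = 2 * (v * n)! * (n + 1) ^ v := by
        rw [Nat.div_mul_cancel (Nat.factorial_pow_dvd_factorial_mul v n)]
    _ ≤ (v * (n + 1))! := Nat.two_mul_factorial_mul_succ_pow_le hv n

/-- `∑_{i=0}^{k} binom(vi; i,…,i) ≤ binom(v(k+1); k+1,…,k+1)` for `v ≥ 2`. -/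
theorem stmt_6 (v k : ℕ) (hv : 2 ≤ v) :
    ∑ i ∈ Finset.range (k + 1), (v * i).factorial / (i.factorial) ^ v ≤
      (v * (k + 1)).factorial / ((k + 1).factorial) ^ v := by
  have hdouble (n : ℕ) :
      (v * n)! / n ! ^ v + (v * n)! / n ! ^ v ≤ (v * (n + 1))! / (n + 1)! ^ v := by
    simpa only [two_mul] using Nat.two_mul_centralMultinomial_le_succ hv n
  exact (Nat.le_add_right _ _).trans (sum_range_add_le_of_add_self_le hdouble (k + 1))
end

section
/- Let p and q be primes with p = vq + 1 for some integer v ≥ 2. The number of permutations π of {1,...,p-1} such that the reduced sequence π_v has least period strictly less than p-1 equals v! · (q!)^v. -/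
/-!
If the sequence `π_v` has a period `N < vq`, it also has the period `d = gcd(N, vq)`, a proper
divisor of `vq`. Each residue occurs `q` times in a full period of length `vq`, hence `vq / d`
divides `q`, which forces `d = v`. A sequence of period `v` says exactly that `π` maps residue
classes mod `v` onto residue classes; identifying `Fin (vq)` with `Fin v × Fin q`, these
permutations are the shears `(a, b) ↦ (σ a, τ a b)`, of which there are `v! · (q!)^v`.
-/

open Function Equiv Nat

theorem Function.Periodic.nat_mod {α : Type*} {f : ℕ → α} {a b : ℕ} (ha : Periodic f a)
    (hb : Periodic f b) : Periodic f (b % a) := fun x => by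
  have hmul : Periodic f (b / a * a) := by simpa using ha.nat_mul (b / a)
  rw [← hmul, add_assoc, Nat.mod_add_div', hb]

theorem Function.Periodic.nat_gcd {α : Type*} {f : ℕ → α} {a b : ℕ} (ha : Periodic f a)
    (hb : Periodic f b) : Periodic f (a.gcd b) := by
  induction a, b using Nat.gcd.induction with
  | H0 b => simpa using hb
  | H1 a b _ ih => rw [Nat.gcd_rec]; exact ih (ha.nat_mod hb) ha

theorem Nat.count_mul_of_periodic {p : ℕ → Prop} [DecidablePred p] {d : ℕ} (hp : Periodic p d)
    (m : ℕ) : count p (m * d) = m * count p d := by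
  induction m with
  | zero => simp
  | succ m ih =>
    have hshift : (fun k => p (m * d + k)) = p := funext fun k => by
      rw [add_comm]; simpa using hp.nat_mul m k
    rw [succ_mul, count_add, ih, succ_mul]
    simp only [hshift]

theorem Nat.count_comp_perm {n : ℕ} [NeZero n] (π : Perm (Fin n)) (p : ℕ → Prop)
    [DecidablePred p] : count (fun i => p (π (Fin.ofNat n i))) n = count p n := by
  simp only [count_eq_card_filter_range, ← Nat.Iio_eq_range, ← Fin.map_valEmbedding_univ,
    Finset.filter_map, Finset.card_map]
  exact Finset.card_equiv π (by simp)

theorem Function.Periodic.of_count_fiber_eq_prime {α : Type*} [DecidableEq α] {f : ℕ → α}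
    {v q N : ℕ} (hN : Periodic f N) (hN0 : 0 < N) (hNlt : N < v * q) (hq : q.Prime)
    (hf : Periodic f (v * q)) (hcount : count (fun i => f i = f 0) (v * q) = q) :
    Periodic f v := by
  set d := N.gcd (v * q)
  have hd : Periodic f d := hN.nat_gcd hf
  obtain ⟨m, hm⟩ : d ∣ v * q := Nat.gcd_dvd_right N (v * q)
  have hfiber : Periodic (fun i => f i = f 0) d := hd.comp (· = f 0)
  have hmq : m * count (fun i => f i = f 0) d = q := by
    rw [← count_mul_of_periodic hfiber, mul_comm, ← hm, hcount]
  rcases hq.eq_one_or_self_of_dvd m ⟨_, hmq.symm⟩ with rfl | rfl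
  · have : d ≤ N := Nat.gcd_le_left _ hN0
    omega
  · rwa [Nat.eq_of_mul_eq_mul_right hq.pos hm]

section PermutesFibers

variable {α α' β γ : Type*}

def PermutesFibers (f : α → β) (ρ : Perm α) : Prop :=
  ∀ x y, f x = f y → f (ρ x) = f (ρ y)

theorem permutesFibers_comp_injective {f : α → β} {g : β → γ} (hg : Injective g)
    (ρ : Perm α) : PermutesFibers (g ∘ f) ρ ↔ PermutesFibers f ρ := by
  simp [PermutesFibers, hg.eq_iff]

theorem permutesFibers_permCongr (e : α ≃ α') (f : α' → β) (ρ : Perm α) :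
    PermutesFibers f (e.permCongr ρ) ↔ PermutesFibers (f ∘ e) ρ := by
  refine ⟨fun h x y hxy => ?_, fun h x y hxy => ?_⟩
  · simpa using h (e x) (e y) hxy
  · simpa using h (e.symm x) (e.symm y) (by simpa using hxy)

theorem prodShear_permutesFibers_fst (σ : Perm α) (τ : α → Perm β) :
    PermutesFibers Prod.fst (prodShear σ τ) := by
  rintro ⟨a, b⟩ ⟨a', b'⟩ (rfl : a = a')
  rfl

theorem prodShear_injective [Nonempty β] :
    Injective (fun στ : Perm α × (α → Perm β) => prodShear στ.1 στ.2) := by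
  rintro ⟨σ, τ⟩ ⟨σ', τ'⟩ h
  have hpt : ∀ a b, σ a = σ' a ∧ τ a b = τ' a b := fun a b =>
    Prod.ext_iff.mp (DFunLike.congr_fun h (a, b))
  obtain ⟨b⟩ := ‹Nonempty β›
  simp only [Prod.mk.injEq]
  exact ⟨Equiv.ext fun a => (hpt a b).1, funext fun a => Equiv.ext fun b => (hpt a b).2⟩

theorem PermutesFibers.exists_prodShear_eq [Finite α] [Finite β] [Nonempty β]
    {ρ : Perm (α × β)} (hρ : PermutesFibers Prod.fst ρ) :
    ∃ (σ : Perm α) (τ : α → Perm β), prodShear σ τ = ρ := by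
  obtain ⟨b₀⟩ := ‹Nonempty β›
  have hfst : ∀ a b, (ρ (a, b)).1 = (ρ (a, b₀)).1 := fun a b => hρ _ _ rfl
  have hσ : Surjective fun a => (ρ (a, b₀)).1 := fun c =>
    ⟨(ρ.symm (c, b₀)).1, by
      change (ρ (_, b₀)).1 = c
      rw [← hfst, Prod.mk.eta, apply_symm_apply]⟩
  have hτ : ∀ a, Injective fun b => (ρ (a, b)).2 := fun a b b' hbb' => by
    simpa using ρ.injective (Prod.ext (hfst a b ▸ hfst a b' ▸ rfl) hbb')
  refine ⟨.ofBijective _ hσ.bijective_of_finite,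
    fun a => .ofBijective _ (hτ a).bijective_of_finite, Equiv.ext fun ⟨a, b⟩ => ?_⟩
  exact Prod.ext (hfst a b).symm rfl

theorem card_permutesFibers_fst [Fintype α] [Fintype β] [Nonempty β] :
    Nat.card {ρ : Perm (α × β) // PermutesFibers Prod.fst ρ} =
      (Fintype.card α)! * (Fintype.card β)! ^ Fintype.card α := by
  classical
  let Φ : Perm α × (α → Perm β) → {ρ : Perm (α × β) // PermutesFibers Prod.fst ρ} :=
    fun στ => ⟨prodShear στ.1 στ.2, prodShear_permutesFibers_fst στ.1 στ.2⟩
  have hΦ : Bijective Φ := by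
    refine ⟨fun x y h => prodShear_injective (congrArg Subtype.val h), fun ⟨ρ, hρ⟩ => ?_⟩
    obtain ⟨σ, τ, rfl⟩ := hρ.exists_prodShear_eq
    exact ⟨(σ, τ), rfl⟩
  rw [← Nat.card_congr (Equiv.ofBijective Φ hΦ), Nat.card_eq_fintype_card, Fintype.card_prod,
    Fintype.card_perm, Fintype.card_fun, Fintype.card_perm]

end PermutesFibers

section ResidueSequence

variable {n : ℕ} [NeZero n]

/-- The paper's sequence `π_v`, with indices read modulo `n`. -/
def residueSeq (v : ℕ) (π : Perm (Fin n)) (i : ℕ) : ℕ := (π (Fin.ofNat n i) : ℕ) % v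

theorem residueSeq_periodic (v : ℕ) (π : Perm (Fin n)) : Periodic (residueSeq v π) n := by
  intro i
  simp [residueSeq, Fin.ofNat, Nat.add_mod_right]

theorem count_residueSeq_eq_residueSeq_zero {v q : ℕ} (hn : n = v * q) (π : Perm (Fin n)) :
    count (fun i => residueSeq v π i = residueSeq v π 0) n = q := by
  have hv : 0 < v := Nat.pos_of_ne_zero fun hv => NeZero.ne n (by rw [hn, hv, zero_mul])
  have hmod : n % v = 0 := by rw [hn]; exact Nat.mul_mod_right v q
  change count (fun i => (π (Fin.ofNat n i) : ℕ) ≡ π (Fin.ofNat n 0) [MOD v]) n = q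
  rw [count_comp_perm π (· ≡ π (Fin.ofNat n 0) [MOD v]), count_modEq_card _ hv, hmod,
    if_neg (Nat.not_lt_zero _), add_zero, hn, Nat.mul_div_cancel_left _ hv]

theorem residueSeq_periodic_iff {v : ℕ} (hvn : v ∣ n) (π : Perm (Fin n)) :
    Periodic (residueSeq v π) v ↔ PermutesFibers (fun i : Fin n => (i : ℕ) % v) π := by
  have hval : ∀ i : Fin n, residueSeq v π i = (π i : ℕ) % v := fun i => by
    simp [residueSeq]
  refine ⟨fun h i j hij => ?_, fun h i => h _ _ ?_⟩
  · simp only at hij ⊢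
    rw [← hval, ← hval, ← h.map_mod_nat, hij, h.map_mod_nat]
  · simp [Fin.ofNat, Nat.mod_mod_of_dvd _ hvn]

theorem residueSeq_exists_period_lt_iff {v q : ℕ} (hq : q.Prime) (hn : n = v * q)
    (π : Perm (Fin n)) :
    (∃ N, 0 < N ∧ N < n ∧ Periodic (residueSeq v π) N) ↔ Periodic (residueSeq v π) v := by
  have hv : 0 < v := Nat.pos_of_ne_zero fun hv => NeZero.ne n (by rw [hn, hv, zero_mul])
  refine ⟨fun ⟨N, hN0, hNn, hN⟩ => ?_,
    fun h => ⟨v, hv, hn ▸ lt_mul_of_one_lt_right hv hq.one_lt, h⟩⟩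
  subst hn
  exact hN.of_count_fiber_eq_prime hN0 hNn hq (residueSeq_periodic v π)
    (count_residueSeq_eq_residueSeq_zero rfl π)

end ResidueSequence

theorem card_residueSeq_exists_period_lt {n v q : ℕ} [NeZero n] (hq : q.Prime)
    (hn : n = v * q) :
    Nat.card {π : Perm (Fin n) // ∃ N, 0 < N ∧ N < n ∧ Periodic (residueSeq v π) N} =
      v ! * q ! ^ v := by
  subst hn
  have : Nonempty (Fin q) := ⟨⟨0, hq.pos⟩⟩
  let e : Fin (v * q) ≃ Fin v × Fin q :=
    (finCongr (mul_comm v q)).trans (finProdFinEquiv.symm.trans (prodComm _ _))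
  have he : (fun i : Fin (v * q) => (i : ℕ) % v) = Fin.val ∘ (Prod.fst ∘ e) := by
    funext i
    simp [e, Fin.modNat]
  have hiff (π : Perm (Fin (v * q))) :
      (∃ N, 0 < N ∧ N < v * q ∧ Periodic (residueSeq v π) N) ↔
        PermutesFibers Prod.fst (e.permCongr π) := by
    rw [residueSeq_exists_period_lt_iff hq rfl, residueSeq_periodic_iff (dvd_mul_right v q), he,
      permutesFibers_comp_injective Fin.val_injective, permutesFibers_permCongr]
  rw [Nat.card_congr (e.permCongr.subtypeEquiv hiff), card_permutesFibers_fst]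
  simp

/-- For primes `p = vq + 1` with `q` prime, the number of permutations `π` of
`{1,…,p-1}` whose reduced sequence `π_v` has least period `< p-1` is `v!·(q!)^v`. -/
theorem stmt_7 (p q v : ℕ) (hp : p.Prime) (hq : q.Prime) (hpq : p = v * q + 1) :
    Nat.card {π : Equiv.Perm (Fin (p - 1)) //
        ∃ N : ℕ, 0 < N ∧ N < p - 1 ∧
          ∀ i : ℕ,
            ((π ⟨(i + N) % (p - 1), Nat.mod_lt _ (by have := hp.two_le; omega)⟩).val + 1) % v =
              ((π ⟨i % (p - 1), Nat.mod_lt _ (by have := hp.two_le; omega)⟩).val + 1) % v} =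
      v.factorial * (q.factorial) ^ v := by
  have : NeZero (p - 1) := ⟨by have := hp.two_le; omega⟩
  -- `Fin (p - 1)` encodes `{1, …, p - 1}` by `k ↦ k + 1`; the shift does not affect periods.
  have hshift (π : Perm (Fin (p - 1))) (i j : ℕ) :
      ((π (Fin.ofNat _ i)).val + 1) % v = ((π (Fin.ofNat _ j)).val + 1) % v ↔
        residueSeq v π i = residueSeq v π j :=
    ⟨Nat.ModEq.add_right_cancel' 1, Nat.ModEq.add_right 1⟩
  rw [← card_residueSeq_exists_period_lt hq (by omega : p - 1 = v * q)]
  exact Nat.card_congr (subtypeEquivRight fun π => exists_congr fun N =>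
    and_congr_right' (and_congr_right' (forall_congr' fun i => hshift π (i + N) i)))
end

section
/- Let l, v ≥ 1 be integers and s_0,...,s_{v-1} ≥ 1 integers with Σ s_i = s and each s_i ≤ l. Then the product Π_{i=0}^{v-1} (l)_{s_i} of falling factorials is minimized (over all such choices with fixed sum s) when one s_i equals s−v+1 and all others equal 1, and is maximized when |s_i − s_j| ≤ 1 for all i, j. -/
open Finset

/-- (l)_{a+b-1} * l ≤ (l)_a (l)_b for a,b ≥ 1. -/
lemma lemA (l a b : ℕ) (hl : 1 ≤ l) (ha : 1 ≤ a) (hb : 1 ≤ b) :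
    Nat.descFactorial l (a + b - 1) * l ≤ Nat.descFactorial l a * Nat.descFactorial l b := by
  have h1 : (l - a).descFactorial (b - 1) * l.descFactorial a
      = l.descFactorial (a + b - 1) := by
    have := Nat.descFactorial_mul_descFactorial (n := l) (k := a) (m := a + b - 1) (by omega)
    simpa [show a + b - 1 - a = b - 1 by omega] using this
  have h2 : l.descFactorial b = l * (l - 1).descFactorial (b - 1) := by
    have := Nat.succ_descFactorial_succ (l - 1) (b - 1)
    rw [show l - 1 + 1 = l by omega, show b - 1 + 1 = b by omega] at this
    exact this
  have h3 : (l - a).descFactorial (b - 1) ≤ (l - 1).descFactorial (b - 1) :=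
    Nat.descFactorial_le _ (by omega)
  calc l.descFactorial (a + b - 1) * l
      = l.descFactorial a * ((l - a).descFactorial (b - 1) * l) := by rw [← h1]; ring
    _ ≤ l.descFactorial a * ((l - 1).descFactorial (b - 1) * l) :=
        Nat.mul_le_mul_left _ (Nat.mul_le_mul_right _ h3)
    _ = l.descFactorial a * l.descFactorial b := by rw [h2]; ring

/-- Exchange step: unbalancing decreases the product. -/
lemma lemB (l a b : ℕ) (hab : b + 2 ≤ a) :
    Nat.descFactorial l a * Nat.descFactorial l b
      ≤ Nat.descFactorial l (a - 1) * Nat.descFactorial l (b + 1) := by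
  have h1 : l.descFactorial a = (l - (a - 1)) * l.descFactorial (a - 1) := by
    have := Nat.descFactorial_succ l (a - 1)
    rw [show a - 1 + 1 = a by omega] at this; exact this
  rw [h1, Nat.descFactorial_succ]
  have hle : l - (a - 1) ≤ l - b := by omega
  calc (l - (a - 1)) * l.descFactorial (a - 1) * l.descFactorial b
      ≤ (l - b) * l.descFactorial (a - 1) * l.descFactorial b :=
        Nat.mul_le_mul_right _ (Nat.mul_le_mul_right _ hle)
    _ = l.descFactorial (a - 1) * ((l - b) * l.descFactorial b) := by ring

lemma lower_main (l : ℕ) (hl : 1 ≤ l) {ι : Type*} [DecidableEq ι] (t : Finset ι)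
    (f : ι → ℕ) : t.Nonempty → (∀ i ∈ t, 1 ≤ f i) →
    Nat.descFactorial l (∑ i ∈ t, f i - (t.card - 1)) * l ^ (t.card - 1)
      ≤ ∏ i ∈ t, Nat.descFactorial l (f i) := by
  induction t using Finset.cons_induction with
  | empty => intro h; simp at h
  | cons a t hat ih =>
    intro _ hf1
    rcases t.eq_empty_or_nonempty with rfl | ht
    · simp
    · have hcard : 1 ≤ t.card := Finset.card_pos.mpr ht
      have hS' : t.card ≤ ∑ i ∈ t, f i := by
        calc t.card = ∑ _i ∈ t, 1 := by simp
          _ ≤ ∑ i ∈ t, f i := Finset.sum_le_sum fun i hi => hf1 i (Finset.mem_cons_of_mem hi)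
      have hfa : 1 ≤ f a := hf1 a (Finset.mem_cons_self a t)
      rw [Finset.sum_cons, Finset.prod_cons, Finset.card_cons]
      set S' := ∑ i ∈ t, f i with hS'def
      set c := t.card with hc
      have hb : 1 ≤ S' - (c - 1) := by omega
      have key : Nat.descFactorial l (f a + S' - (c + 1 - 1)) * l ^ (c + 1 - 1)
          = Nat.descFactorial l (f a + (S' - (c - 1)) - 1) * l * l ^ (c - 1) := by
        rw [show f a + S' - (c + 1 - 1) = f a + (S' - (c - 1)) - 1 by omega,
          show c + 1 - 1 = (c - 1) + 1 by omega, pow_succ]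
        ring
      rw [key]
      calc Nat.descFactorial l (f a + (S' - (c - 1)) - 1) * l * l ^ (c - 1)
          ≤ Nat.descFactorial l (f a) * Nat.descFactorial l (S' - (c - 1)) * l ^ (c - 1) :=
            Nat.mul_le_mul_right _ (lemA l (f a) (S' - (c - 1)) hl hfa hb)
        _ = Nat.descFactorial l (f a) * (Nat.descFactorial l (S' - (c - 1)) * l ^ (c - 1)) := by
            ring
        _ ≤ Nat.descFactorial l (f a) * ∏ i ∈ t, Nat.descFactorial l (f i) :=
            Nat.mul_le_mul_left _ (ih ht fun i hi => hf1 i (Finset.mem_cons_of_mem hi))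

lemma peel2 {M : Type*} [CommMonoid M] {v : ℕ} (F : Fin v → M) (i j : Fin v) (hij : i ≠ j) :
    ∏ x, F x = F i * F j * ∏ x ∈ (Finset.univ.erase i).erase j, F x := by
  rw [← Finset.mul_prod_erase Finset.univ F (Finset.mem_univ i),
    ← Finset.mul_prod_erase (Finset.univ.erase i) F
      (Finset.mem_erase.mpr ⟨hij.symm, Finset.mem_univ j⟩), mul_assoc]

lemma peel2_sum {v : ℕ} (F : Fin v → ℕ) (i j : Fin v) (hij : i ≠ j) :
    ∑ x, F x = F i + F j + ∑ x ∈ (Finset.univ.erase i).erase j, F x :=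
  peel2 (M := Multiplicative ℕ) F i j hij

lemma balanced_prod (l v s : ℕ) (hv : 1 ≤ v) (g : Fin v → ℕ)
    (hsum : ∑ i, g i = s) (hbal : ∀ i j, g i ≤ g j + 1) :
    ∏ i, Nat.descFactorial l (g i)
      = Nat.descFactorial l (s / v + 1) ^ (s % v)
        * Nat.descFactorial l (s / v) ^ (v - s % v) := by
  have huniv : (Finset.univ : Finset (Fin v)).Nonempty := ⟨⟨0, hv⟩, Finset.mem_univ _⟩
  obtain ⟨i0, -, hmin⟩ := Finset.exists_min_image Finset.univ g huniv
  set m := g i0 with hm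
  have hrange : ∀ i, g i = m ∨ g i = m + 1 := by
    intro i
    have h1 := hmin i (Finset.mem_univ i)
    have h2 := hbal i i0
    omega
  have hcount : s = v * m + (Finset.univ.filter (fun i => g i = m + 1)).card := by
    rw [← hsum,
      Finset.sum_congr rfl (fun i (_ : i ∈ Finset.univ) =>
        show g i = m + (if g i = m + 1 then 1 else 0) by
          rcases hrange i with h | h <;> simp [h]),
      Finset.sum_add_distrib, Finset.sum_const, Finset.sum_boole, Finset.card_univ,
      Fintype.card_fin, smul_eq_mul, Nat.cast_id]
  have hTle : (Finset.univ.filter (fun i => g i = m + 1)).card ≤ v := by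
    have := Finset.card_filter_le (Finset.univ : Finset (Fin v)) (fun i => g i = m + 1)
    simpa using this
  rcases eq_or_lt_of_le hTle with hTv | hTv
  · -- all entries equal m+1
    have hTuniv : Finset.univ.filter (fun i => g i = m + 1) = Finset.univ :=
      Finset.eq_of_subset_of_card_le (Finset.filter_subset _ _) (by simp [hTv])
    have hall : ∀ i, g i = m + 1 := fun i => by
      have hi : i ∈ Finset.univ.filter (fun i => g i = m + 1) := by
        rw [hTuniv]; exact Finset.mem_univ i
      exact (Finset.mem_filter.mp hi).2
    have hs : s = v * (m + 1) := by rw [hcount, hTv]; ring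
    have hq : s / v = m + 1 := by rw [hs]; exact Nat.mul_div_cancel_left _ (by omega)
    have hr : s % v = 0 := by rw [hs]; exact Nat.mul_mod_right _ _
    rw [hq, hr]
    simp only [pow_zero, one_mul, Nat.sub_zero]
    rw [Finset.prod_congr rfl (fun i _ => by rw [hall i]), Finset.prod_const]
    simp
  · have hq : s / v = m := by
      rw [hcount, show v * m + (Finset.univ.filter (fun i => g i = m + 1)).card
          = (Finset.univ.filter (fun i => g i = m + 1)).card + m * v by ring,
        Nat.add_mul_div_right _ _ (show 0 < v by omega), Nat.div_eq_of_lt hTv]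
      omega
    have hr : s % v = (Finset.univ.filter (fun i => g i = m + 1)).card := by
      rw [hcount, show v * m + (Finset.univ.filter (fun i => g i = m + 1)).card
          = (Finset.univ.filter (fun i => g i = m + 1)).card + m * v by ring,
        Nat.add_mul_mod_self_right, Nat.mod_eq_of_lt hTv]
    have hsplit := Finset.prod_filter_mul_prod_filter_not Finset.univ
      (fun i => g i = m + 1) (fun i => Nat.descFactorial l (g i))
    rw [hq, hr, ← hsplit]
    have hp1 : ∏ i ∈ Finset.univ.filter (fun i => g i = m + 1), Nat.descFactorial l (g i)
        = Nat.descFactorial l (m + 1) ^ (Finset.univ.filter (fun i => g i = m + 1)).card := by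
      rw [Finset.prod_congr rfl (fun i hi => by
        rw [(Finset.mem_filter.mp hi).2]), Finset.prod_const]
    have hcard2 : (Finset.univ.filter (fun i => ¬ g i = m + 1)).card
        = v - (Finset.univ.filter (fun i => g i = m + 1)).card := by
      have := Finset.card_filter_add_card_filter_not
        (s := (Finset.univ : Finset (Fin v))) (p := fun i => g i = m + 1)
      simp only [Finset.card_univ, Fintype.card_fin] at this
      omega
    have hp2 : ∏ i ∈ Finset.univ.filter (fun i => ¬ g i = m + 1), Nat.descFactorial l (g i)
        = Nat.descFactorial l m ^ (v - (Finset.univ.filter (fun i => g i = m + 1)).card) := by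
      rw [Finset.prod_congr rfl (fun i hi => by
        have h2 := (Finset.mem_filter.mp hi).2
        rcases hrange i with h | h
        · rw [h]
        · exact absurd h h2), Finset.prod_const, hcard2]
    rw [hp1, hp2]

lemma upper_main (l v : ℕ) (hv : 1 ≤ v) : ∀ N (f : Fin v → ℕ),
    (∑ i, (f i) ^ 2) ≤ N → (∀ i, 1 ≤ f i) → (∀ i, f i ≤ l) →
    ∏ i, Nat.descFactorial l (f i)
      ≤ Nat.descFactorial l ((∑ i, f i) / v + 1) ^ ((∑ i, f i) % v)
        * Nat.descFactorial l ((∑ i, f i) / v) ^ (v - (∑ i, f i) % v) := by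
  intro N
  induction N with
  | zero =>
    intro f hN hf1 _
    exfalso
    have : (f ⟨0, hv⟩) ^ 2 ≤ ∑ i, (f i) ^ 2 :=
      Finset.single_le_sum (f := fun i => (f i) ^ 2) (fun i _ => Nat.zero_le _)
        (Finset.mem_univ _)
    have := hf1 ⟨0, hv⟩
    nlinarith
  | succ n ih =>
    intro f hN hf1 hfl
    by_cases hbal : ∀ i j, f i ≤ f j + 1
    · exact le_of_eq (balanced_prod l v _ hv f rfl hbal)
    · push_neg at hbal
      obtain ⟨i, j, hij2⟩ := hbal
      have hij : i ≠ j := by rintro rfl; omega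
      have hji : j ≠ i := hij.symm
      set f' : Fin v → ℕ :=
        Function.update (Function.update f i (f i - 1)) j (f j + 1) with hf'
      have hf'i : f' i = f i - 1 := by
        rw [hf', Function.update_of_ne hij, Function.update_self]
      have hf'j : f' j = f j + 1 := by rw [hf', Function.update_self]
      have hf'x : ∀ x, x ≠ i → x ≠ j → f' x = f x := by
        intro x hxi hxj
        rw [hf', Function.update_of_ne hxj, Function.update_of_ne hxi]
      have hrest : ∀ (G : ℕ → ℕ), ∏ x ∈ (Finset.univ.erase i).erase j, G (f' x)
          = ∏ x ∈ (Finset.univ.erase i).erase j, G (f x) := by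
        intro G
        apply Finset.prod_congr rfl
        intro x hx
        have hxj : x ≠ j := (Finset.mem_erase.mp hx).1
        have hxi : x ≠ i := (Finset.mem_erase.mp (Finset.mem_erase.mp hx).2).1
        rw [hf'x x hxi hxj]
      have hrestsum : ∀ (G : ℕ → ℕ), ∑ x ∈ (Finset.univ.erase i).erase j, G (f' x)
          = ∑ x ∈ (Finset.univ.erase i).erase j, G (f x) := by
        intro G
        apply Finset.sum_congr rfl
        intro x hx
        have hxj : x ≠ j := (Finset.mem_erase.mp hx).1
        have hxi : x ≠ i := (Finset.mem_erase.mp (Finset.mem_erase.mp hx).2).1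
        rw [hf'x x hxi hxj]
      have hrests : ∑ x ∈ (Finset.univ.erase i).erase j, f' x
          = ∑ x ∈ (Finset.univ.erase i).erase j, f x := hrestsum (fun t => t)
      have hsum' : ∑ x, f' x = ∑ x, f x := by
        rw [peel2_sum f' i j hij, peel2_sum f i j hij, hrests, hf'i, hf'j]
        omega
      have hmeas : ∑ x, (f' x) ^ 2 < ∑ x, (f x) ^ 2 := by
        rw [peel2_sum (fun x => (f' x) ^ 2) i j hij,
          peel2_sum (fun x => (f x) ^ 2) i j hij]
        rw [show ∑ x ∈ (Finset.univ.erase i).erase j, f' x ^ 2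
            = ∑ x ∈ (Finset.univ.erase i).erase j, f x ^ 2 from hrestsum (fun t => t ^ 2)]
        have : (f' i) ^ 2 + (f' j) ^ 2 < (f i) ^ 2 + (f j) ^ 2 := by
          rw [hf'i, hf'j]
          obtain ⟨c, hc⟩ : ∃ c, f i = c + 1 := ⟨f i - 1, by omega⟩
          rw [hc]
          simp only [Nat.add_sub_cancel]
          nlinarith
        omega
      have hstep : ∏ x, Nat.descFactorial l (f x) ≤ ∏ x, Nat.descFactorial l (f' x) := by
        rw [peel2 (fun x => Nat.descFactorial l (f' x)) i j hij,
          peel2 (fun x => Nat.descFactorial l (f x)) i j hij]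
        rw [hrest (fun t => Nat.descFactorial l t), hf'i, hf'j]
        exact Nat.mul_le_mul_right _ (lemB l (f i) (f j) (by omega))
      have h1' : ∀ x, 1 ≤ f' x := by
        intro x
        by_cases hxi : x = i
        · rw [hxi, hf'i]; omega
        by_cases hxj : x = j
        · rw [hxj, hf'j]; omega
        · rw [hf'x x hxi hxj]; exact hf1 x
      have hl' : ∀ x, f' x ≤ l := by
        intro x
        by_cases hxi : x = i
        · rw [hxi, hf'i]; have := hfl i; omega
        by_cases hxj : x = j
        · rw [hxj, hf'j]; have := hfl i; have := hfl j; omega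
        · rw [hf'x x hxi hxj]; exact hfl x
      have := ih f' (by omega) h1' hl'
      rw [hsum'] at this
      exact le_trans hstep this

/-- Among tuples `(s_0,…,s_{v-1})` of integers with `1 ≤ s_i ≤ l` and fixed sum `s`,
the product of falling factorials `∏ (l)_{s_i}` is minimized by the configuration
`(s-v+1, 1, …, 1)` and maximized by any balanced configuration (`|s_i - s_j| ≤ 1`). -/
theorem stmt_9 (l v s : ℕ) (hl : 1 ≤ l) (hv : 1 ≤ v)
    (f : Fin v → ℕ) (hf1 : ∀ i, 1 ≤ f i) (hfl : ∀ i, f i ≤ l)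
    (hsum : ∑ i, f i = s) :
    Nat.descFactorial l (s - v + 1) * l ^ (v - 1) ≤ ∏ i, Nat.descFactorial l (f i) ∧
      ∀ g : Fin v → ℕ, (∀ i, 1 ≤ g i) → (∀ i, g i ≤ l) → (∑ i, g i = s) →
        (∀ i j, g i ≤ g j + 1) →
        ∏ i, Nat.descFactorial l (f i) ≤ ∏ i, Nat.descFactorial l (g i) := by
  have huniv : (Finset.univ : Finset (Fin v)).Nonempty := ⟨⟨0, hv⟩, Finset.mem_univ _⟩
  have hsv : v ≤ s := by
    rw [← hsum]
    calc v = ∑ _i : Fin v, 1 := by simp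
      _ ≤ ∑ i, f i := Finset.sum_le_sum fun i _ => hf1 i
  constructor
  · have := lower_main l hl Finset.univ f huniv (fun i _ => hf1 i)
    rw [hsum, Finset.card_univ, Fintype.card_fin] at this
    rwa [show s - v + 1 = s - (v - 1) by omega]
  · intro g hg1 hgl hgsum hgbal
    have h1 := upper_main l v hv (∑ i, (f i) ^ 2) f le_rfl hf1 hfl
    rw [hsum] at h1
    rw [balanced_prod l v s hv g hgsum hgbal]
    exact h1
end

section
/- Let p be an odd prime, v ≥ 2, and g a primitive root modulo p. Then the ElGamal sequence γ_v defined by γ_v(i) = (g^i mod p) mod v for 0 ≤ i < p−1, viewed as a circular sequence of length p−1, has least period exactly p−1. -/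
/-! If `N < p - 1` were a period, then `a = g ^ N mod p` would satisfy `1 < a < p` and `a ≡ 1 (mod v)`.
For `x = ⌊p / a⌋ + 1` one has `p < x a < 2 p`, so `x a mod p = x a - p`; periodicity at the index `i`
with `g ^ i ≡ x` gives `x a - p ≡ x ≡ x a (mod v)`, hence `v ∣ p`, so `v = p` and then `a = 1`. -/

theorem Nat.exists_mul_mod_mod_ne {p v a : ℕ} (hp : p.Prime) (hv : 2 ≤ v) (ha : 1 < a)
    (hap : a < p) (hav : a ≡ 1 [MOD v]) : ∃ x, 0 < x ∧ x < p ∧ x * a % p % v ≠ x % v := by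
  have hhalf : p / a ≤ p / 2 := Nat.div_le_div_left ha (by norm_num)
  refine ⟨p / a + 1, Nat.succ_pos _, by omega, fun h => ?_⟩
  set x := p / a + 1
  have hlo : p < x * a := mul_comm a x ▸ Nat.lt_mul_div_succ p (by omega)
  have hhi : x * a < 2 * p := by
    have := Nat.div_mul_le_self p a
    simp only [x, add_mul, one_mul]
    omega
  have hmod : x * a % p = x * a - p := by
    rw [Nat.mod_eq_sub_mod hlo.le, Nat.mod_eq_of_lt (by omega)]
  have hxa : x * a ≡ x [MOD v] := by simpa using (Nat.ModEq.refl x).mul hav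
  have hdvd : v ∣ x * a - (x * a - p) :=
    (Nat.modEq_iff_dvd' (Nat.sub_le _ _)).mp ((hmod ▸ h : x * a - p ≡ x [MOD v]).trans hxa.symm)
  rw [Nat.sub_sub_self hlo.le] at hdvd
  obtain rfl : v = p := (hp.eq_one_or_self_of_dvd v hdvd).resolve_left (by omega)
  rw [Nat.ModEq, Nat.mod_eq_of_lt hap, Nat.mod_eq_of_lt hp.one_lt] at hav
  omega

theorem stmt_12_general (p v g : ℕ) (hp : p.Prime) (hv : 2 ≤ v)
    (hg : IsPrimitiveRoot (g : ZMod p) (p - 1)) :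
    (∀ i : ℕ, (g ^ (i + (p - 1)) % p) % v = (g ^ i % p) % v) ∧
      (∀ N : ℕ, 0 < N → (∀ i : ℕ, (g ^ (i + N) % p) % v = (g ^ i % p) % v) →
        p - 1 ≤ N) := by
  have := Fact.mk hp
  have : NeZero (p - 1) := ⟨by have := hp.two_le; omega⟩
  have hval (n : ℕ) : g ^ n % p = ((g : ZMod p) ^ n).val := by
    rw [← Nat.cast_pow, ZMod.val_natCast]
  simp only [hval]
  refine ⟨fun i => by rw [pow_add, hg.pow_eq_one, mul_one], fun N hN hper => ?_⟩
  by_contra! hNp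
  set u := (g : ZMod p) ^ N
  have hu0 : u.val ≠ 0 := by
    rw [Ne, ZMod.val_eq_zero]; exact ((hg.isUnit (NeZero.ne _)).pow N).ne_zero
  have hu1 : u.val ≠ 1 := by
    rw [Ne, ZMod.val_eq_one hp.one_lt]; exact hg.pow_ne_one_of_pos_of_lt hN.ne' hNp
  obtain ⟨x, hx0, hxp, hx⟩ := Nat.exists_mul_mod_mod_ne hp hv (by omega) (ZMod.val_lt u)
    (by simpa [ZMod.val_one] using hper 0 : u.val % v = 1 % v)
  have hx0' : (x : ZMod p) ≠ 0 := by
    rw [Ne, ZMod.natCast_eq_zero_iff]; exact fun h => (Nat.le_of_dvd hx0 h).not_gt hxp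
  obtain ⟨i, -, hi⟩ := hg.eq_pow_of_pow_eq_one (ZMod.pow_card_sub_one_eq_one hx0')
  apply hx
  simpa [pow_add, hi, ZMod.val_mul, ZMod.val_natCast, Nat.mod_eq_of_lt hxp] using hper i

/-- The ElGamal sequence `γ_v(i) = (g^i mod p) mod v` has least period exactly `p-1`. -/
theorem stmt_12 (p v g : ℕ) (hp : p.Prime) (hodd : Odd p) (hv : 2 ≤ v)
    (hg : IsPrimitiveRoot (g : ZMod p) (p - 1)) :
    (∀ i : ℕ, (g ^ (i + (p - 1)) % p) % v = (g ^ i % p) % v) ∧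
      (∀ N : ℕ, 0 < N → (∀ i : ℕ, (g ^ (i + N) % p) % v = (g ^ i % p) % v) →
        p - 1 ≤ N) :=
  stmt_12_general p v g hp hv hg
end

section
/- Let p be an odd prime with p ≡ 1 (mod v), g a primitive root mod p with g < v. Then for all i, γ_v(i+1) ≡ g·γ_v(i) − s (mod v) for some integer s with 0 ≤ s < g, where γ_v(i) = (g^i mod p) mod v. -/
/-- If `g < v` is a primitive root mod `p` and `p ≡ 1 (mod v)`, then consecutive terms of
the ElGamal sequence satisfy `γ_v(i+1) ≡ g·γ_v(i) − s (mod v)` for some `0 ≤ s < g`. -/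
theorem stmt_16 (p v g : ℕ) (hp : p.Prime) (hodd : Odd p) (hv : 2 ≤ v)
    (hg : IsPrimitiveRoot (g : ZMod p) (p - 1)) (hgv : g < v) (hpv : p % v = 1) :
    ∀ i : ℕ, ∃ s : ℕ, s < g ∧
      ((g ^ (i + 1) % p) % v : ℤ) ≡ (g : ℤ) * ((g ^ i % p) % v : ℤ) - (s : ℤ) [ZMOD (v : ℤ)] := by
  intro i
  haveI : Fact p.Prime := ⟨hp⟩
  have hp3 : 3 ≤ p := by
    have h2 := hp.two_le
    have : p ≠ 2 := by rintro rfl; exact (by decide : ¬ Odd 2) hodd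
    omega
  have hg0 : 0 < g := by
    rcases Nat.eq_zero_or_pos g with h | h
    · subst h
      have := hg.pow_eq_one
      simp only [Nat.cast_zero, zero_pow (by omega : p - 1 ≠ 0)] at this
      exact absurd this.symm one_ne_zero
    · exact h
  set a := g ^ i % p with ha
  set b := g ^ (i + 1) % p with hb
  have hab : b = g * a % p := by
    simp [hb, ha, pow_succ, Nat.mul_mod, Nat.mul_comm]
  refine ⟨g * a / p, ?_, ?_⟩
  · have halt : a < p := Nat.mod_lt _ hp.pos
    rw [Nat.div_lt_iff_lt_mul hp.pos]
    exact (Nat.mul_lt_mul_left hg0).mpr halt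
  · set s := g * a / p with hs
    have key : g * a = p * s + b := by
      rw [hab, hs]; exact (Nat.div_add_mod _ _).symm
    have h2 : (b : ℤ) = (g : ℤ) * a - p * s := by
      have : (g : ℤ) * a = p * s + b := by exact_mod_cast key
      linarith
    have hp1 : (p : ℤ) ≡ 1 [ZMOD (v : ℤ)] := by
      show (p : ℤ) % v = 1 % v
      rw [← Int.natCast_mod, hpv, Int.emod_eq_of_lt (by norm_num) (by exact_mod_cast hv)]
      norm_num
    have hgoalL : ((g : ℤ) ^ (i + 1) % p % v) = ((b % v : ℕ) : ℤ) := by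
      rw [hb]; push_cast; ring
    have hgoalR : ((g : ℤ) ^ i % p % v) = ((a % v : ℕ) : ℤ) := by
      rw [ha]; push_cast; ring
    rw [hgoalL, hgoalR]
    have hbm : ((b % v : ℕ) : ℤ) ≡ (b : ℤ) [ZMOD (v : ℤ)] := by
      show ((b % v : ℕ) : ℤ) % v = (b : ℤ) % v
      rw [Int.natCast_mod, Int.emod_emod_of_dvd _ dvd_rfl]
    have ham : ((a % v : ℕ) : ℤ) ≡ (a : ℤ) [ZMOD (v : ℤ)] := by
      show ((a % v : ℕ) : ℤ) % v = (a : ℤ) % v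
      rw [Int.natCast_mod, Int.emod_emod_of_dvd _ dvd_rfl]
    calc ((b % v : ℕ) : ℤ) ≡ (b : ℤ) [ZMOD (v : ℤ)] := hbm
      _ = (g : ℤ) * a - p * s := h2
      _ ≡ (g : ℤ) * a - 1 * s [ZMOD (v : ℤ)] := (Int.ModEq.refl _).sub (hp1.mul (Int.ModEq.refl _))
      _ = (g : ℤ) * a - s := by ring
      _ ≡ (g : ℤ) * ((a % v : ℕ) : ℤ) - s [ZMOD (v : ℤ)] :=
        ((ham.symm).mul_left _).sub (Int.ModEq.refl _)
end

section
/- Let p be an odd prime with v^t ≥ 2, g = v a primitive root mod p, and write p = q·v^(t−1) + r with 0 ≤ r < v^(t−1). Define n_l and n_u by n_l + n_u = v^t and n_l·⌊q/v⌋ + n_u·(⌊q/v⌋+1) = p−1. Then n_l > 0; that is, there always exists a tuple z ∈ Z_v^t with λ(z) = ⌊q/v⌋. Moreover n_u = 0 if and only if p ≡ 1 (mod v^t). -/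
/-!
Since `v` generates `(ZMod p)ˣ`, the residues `x = v ^ i % p` for `i < p - 1` run exactly
once through `1, …, p - 1`, and shifting the window by `ι` multiplies `x` by `v ^ ι` mod `p`.
As `v` is prime to `p`, the window `v ^ ι * x % p`, `ι < t`, is divisible by `v` throughout
iff `v ∣ x` and `v ^ (t - 1) * x < p`, i.e. `x = v * m` with `1 ≤ m ≤ (p - 1) / v ^ t`. So the
zero tuple occurs `(p - 1) / v ^ t = q / v` times. The two linear equations force
`n_u = (p - 1) % v ^ t < v ^ t`, whence `n_l > 0`, and `n_u = 0` iff `v ^ t ∣ p - 1`.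
-/

open Finset

lemma dvd_mul_mod_iff_mul_lt {v p y : ℕ} (hv : 0 < v) (hvp : v.Coprime p) (hy : y < p) :
    v ∣ v * y % p ↔ v * y < p := by
  have hquot : v * y / p < v :=
    Nat.div_lt_of_lt_mul (by rw [mul_comm p]; exact Nat.mul_lt_mul_of_pos_left hy hv)
  have hsum : v ∣ p * (v * y / p) + v * y % p := by
    rw [Nat.div_add_mod]; exact dvd_mul_right v y
  calc v ∣ v * y % p ↔ v ∣ p * (v * y / p) :=
        ⟨fun h => (Nat.dvd_add_left h).mp hsum, fun h => (Nat.dvd_add_right h).mp hsum⟩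
    _ ↔ v ∣ v * y / p := hvp.dvd_mul_left
    _ ↔ v * y / p = 0 :=
        ⟨fun h => Nat.eq_zero_of_dvd_of_lt h hquot, fun h => h ▸ dvd_zero v⟩
    _ ↔ v * y < p := by rw [Nat.div_eq_zero_iff]; omega

lemma forall_dvd_pow_mul_mod_iff {v p x : ℕ} (hv : 0 < v) (hvp : v.Coprime p) (hx : x < p)
    (n : ℕ) : (∀ j < n + 1, v ∣ v ^ j * x % p) ↔ v ∣ x ∧ v ^ n * x < p := by
  induction n with
  | zero => simp [Nat.mod_eq_of_lt hx, hx]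
  | succ n ih =>
    rw [Nat.forall_lt_succ_right, ih, pow_succ', mul_assoc]
    constructor
    · rintro ⟨⟨hdvd, hlt⟩, hnext⟩
      exact ⟨hdvd, (dvd_mul_mod_iff_mul_lt hv hvp hlt).mp hnext⟩
    · rintro ⟨hdvd, hlt⟩
      have hlt' : v ^ n * x < p := lt_of_le_of_lt (Nat.le_mul_of_pos_left _ hv) hlt
      exact ⟨⟨hdvd, hlt'⟩, (dvd_mul_mod_iff_mul_lt hv hvp hlt').mpr hlt⟩

lemma card_filter_dvd_pow_mul_lt {v p : ℕ} (hv : 0 < v) (n : ℕ) :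
    #{x ∈ Icc 1 (p - 1) | v ∣ x ∧ v ^ n * x < p} = (p - 1) / v ^ (n + 1) := by
  have hpos : 0 < v ^ n := pow_pos hv n
  have hfilter : {x ∈ Icc 1 (p - 1) | v ∣ x ∧ v ^ n * x < p} =
      {x ∈ Ioc 0 ((p - 1) / v ^ n) | v ∣ x} := by
    ext x
    simp only [mem_filter, mem_Icc, mem_Ioc, Nat.le_div_iff_mul_le hpos]
    have : x ≤ v ^ n * x := Nat.le_mul_of_pos_left x hpos
    have := mul_comm x (v ^ n)
    constructor
    · rintro ⟨⟨h1, -⟩, hdvd, hlt⟩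
      exact ⟨⟨h1, by omega⟩, hdvd⟩
    · rintro ⟨⟨h1, hle⟩, hdvd⟩
      exact ⟨⟨h1, by omega⟩, hdvd, by omega⟩
  rw [hfilter, Nat.Ioc_filter_dvd_card_eq_div, Nat.div_div_eq_div_mul, pow_succ]

section PrimitiveRoot

variable {p v : ℕ} [Fact p.Prime] (hg : IsPrimitiveRoot (v : ZMod p) (p - 1))
include hg

lemma coprime_of_isPrimitiveRoot : v.Coprime p := by
  have hp := (Fact.out : p.Prime)
  have hv : (v : ZMod p) ≠ 0 := hg.ne_zero (by have := hp.two_le; omega)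
  rw [Ne, ZMod.natCast_eq_zero_iff] at hv
  exact ((Nat.Prime.coprime_iff_not_dvd hp).2 hv).symm

lemma pow_add_mod_sub_one_mod (i j : ℕ) :
    v ^ ((i + j) % (p - 1)) % p = v ^ j * (v ^ i % p) % p := by
  rw [← ZMod.natCast_eq_natCast_iff']
  simp only [Nat.cast_pow, Nat.cast_mul, ZMod.natCast_mod]
  rw [hg.eq_orderOf, pow_mod_orderOf, pow_add, mul_comm]

lemma card_filter_range_pow_mod (P : ℕ → Prop) [DecidablePred P] :
    #{i ∈ range (p - 1) | P (v ^ i % p)} = #{x ∈ Icc 1 (p - 1) | P x} := by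
  have hp := (Fact.out : p.Prime)
  have hcop := coprime_of_isPrimitiveRoot hg
  have hnd : NeZero (p - 1) := ⟨by have := hp.two_le; omega⟩
  apply card_nbij (fun i => v ^ i % p)
  · intro i hi
    simp only [mem_coe, mem_filter, mem_range, mem_Icc] at hi ⊢
    have hndvd : ¬ p ∣ v ^ i := fun h => hp.one_lt.ne' ((hcop.pow_left i).symm.eq_one_of_dvd h)
    have hlt := Nat.mod_lt (v ^ i) hp.pos
    exact ⟨⟨Nat.pos_of_ne_zero (mt Nat.dvd_of_mod_eq_zero hndvd), by omega⟩, hi.2⟩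
  · intro a ha b hb hab
    simp only [mem_coe, mem_filter, mem_range] at ha hb
    refine hg.pow_inj ha.1 hb.1 ?_
    simpa [← ZMod.natCast_eq_natCast_iff'] using hab
  · intro x hx
    simp only [mem_coe, mem_filter, mem_Icc] at hx
    have hx0 : (x : ZMod p) ≠ 0 := by
      rw [Ne, ZMod.natCast_eq_zero_iff]; exact Nat.not_dvd_of_pos_of_lt (by omega) (by omega)
    obtain ⟨i, hi, hix⟩ := hg.eq_pow_of_pow_eq_one (ZMod.pow_card_sub_one_eq_one hx0)
    have : v ^ i % p = x := by
      rw [← Nat.mod_eq_of_lt (show x < p by omega), ← ZMod.natCast_eq_natCast_iff']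
      push_cast; exact hix
    exact ⟨i, mem_filter.2 ⟨mem_range.2 hi, this ▸ hx.2⟩, this⟩

lemma card_filter_range_pow_window_mod_eq_zero {t : ℕ} (ht : 0 < t) :
    #{i ∈ range (p - 1) | ∀ ι : Fin t, v ^ ((i + ι) % (p - 1)) % p % v = 0} =
      (p - 1) / v ^ t := by
  obtain ⟨n, rfl⟩ : ∃ n, t = n + 1 := ⟨t - 1, by omega⟩
  have hcop := coprime_of_isPrimitiveRoot hg
  have hv : 0 < v := Nat.pos_of_ne_zero fun h => by
    rw [h, Nat.coprime_zero_left] at hcop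
    exact (Fact.out : p.Prime).one_lt.ne' hcop
  calc _ = #{i ∈ range (p - 1) | ∀ j < n + 1, v ∣ v ^ j * (v ^ i % p) % p} := by
        congr 1
        refine filter_congr fun i _ => ?_
        simp only [Fin.forall_iff, pow_add_mod_sub_one_mod hg, Nat.dvd_iff_mod_eq_zero]
    _ = #{x ∈ Icc 1 (p - 1) | ∀ j < n + 1, v ∣ v ^ j * x % p} :=
        card_filter_range_pow_mod hg (fun x => ∀ j < n + 1, v ∣ v ^ j * x % p)
    _ = #{x ∈ Icc 1 (p - 1) | v ∣ x ∧ v ^ n * x < p} := by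
        congr 1
        refine filter_congr fun x hx => forall_dvd_pow_mul_mod_iff hv hcop ?_ n
        rw [mem_Icc] at hx
        omega
    _ = (p - 1) / v ^ (n + 1) := card_filter_dvd_pow_mul_lt hv n

end PrimitiveRoot

lemma sub_one_div_pow_eq_div {p v t q r : ℕ} (hndvd : ¬ v ^ t ∣ p) (ht : 0 < t)
    (hpqr : p = q * v ^ (t - 1) + r) (hr : r < v ^ (t - 1)) : (p - 1) / v ^ t = q / v := by
  have hp : p = p - 1 + 1 := by
    have : p ≠ 0 := by rintro rfl; exact hndvd (dvd_zero _)
    omega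
  have hq : p / v ^ (t - 1) = q := by
    rw [hpqr, add_comm, Nat.add_mul_div_right _ _ (by omega), Nat.div_eq_of_lt hr, zero_add]
  rw [← Nat.succ_div_of_not_dvd (hp ▸ hndvd), ← hp, ← hq, Nat.div_div_eq_div_mul,
    ← pow_succ, Nat.sub_add_cancel ht]

lemma sub_one_mod_eq_zero_iff {p n : ℕ} (hp : 0 < p) (hn : n ≠ 1) :
    (p - 1) % n = 0 ↔ p % n = 1 := by
  rw [← Nat.dvd_iff_mod_eq_zero, ← Nat.modEq_iff_dvd' hp, Nat.ModEq, Nat.one_mod_eq_one.2 hn,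
    eq_comm]

theorem stmt_17_general (p v t q r : ℕ) (hp : p.Prime) (hvt : 2 ≤ v ^ t)
    (hg : IsPrimitiveRoot (v : ZMod p) (p - 1))
    (hpqr : p = q * v ^ (t - 1) + r) (hr : r < v ^ (t - 1)) :
    ∀ nl nu : ℕ, nl + nu = v ^ t → nl * (q / v) + nu * (q / v + 1) = p - 1 →
      (0 < nl ∧
        (∃ z : Fin t → Fin v,
          ((Finset.range (p - 1)).filter (fun i =>
            ∀ ι : Fin t, (v ^ ((i + (ι : ℕ)) % (p - 1)) % p) % v = (z ι : ℕ))).card = q / v) ∧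
        (nu = 0 ↔ p % v ^ t = 1)) := by
  intro nl nu hsum heq
  have : Fact p.Prime := ⟨hp⟩
  have ht : 0 < t := Nat.pos_of_ne_zero (by rintro rfl; simp at hvt)
  have hv : 0 < v := Nat.pos_of_ne_zero (by rintro rfl; simp [zero_pow ht.ne'] at hvt)
  have hndvd : ¬ v ^ t ∣ p := fun h => by
    have := ((coprime_of_isPrimitiveRoot hg).pow_left t).eq_one_of_dvd h
    omega
  have hquot := sub_one_div_pow_eq_div hndvd ht hpqr hr
  have hnu : nu = (p - 1) % v ^ t := by
    have h : v ^ t * ((p - 1) / v ^ t) + nu = p - 1 := by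
      rw [hquot, ← hsum, ← heq]
      ring
    have := Nat.div_add_mod (p - 1) (v ^ t)
    omega
  have hnu_lt : nu < v ^ t := hnu ▸ Nat.mod_lt _ (by omega)
  refine ⟨by omega, ⟨fun _ => ⟨0, hv⟩, ?_⟩, ?_⟩
  · rw [← hquot]
    exact card_filter_range_pow_window_mod_eq_zero hg ht
  · rw [hnu, sub_one_mod_eq_zero_iff hp.pos (by omega)]

/-- For `g = v` a primitive root mod `p`, writing `p = q·v^(t-1)+r` with `0 ≤ r < v^(t-1)`,
if `n_l + n_u = v^t` and `n_l·⌊q/v⌋ + n_u·(⌊q/v⌋+1) = p − 1`, then `n_l > 0`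
(in particular some tuple `z` has `λ(z) = ⌊q/v⌋`), and `n_u = 0 ↔ p ≡ 1 (mod v^t)`. -/
theorem stmt_17 (p v t q r : ℕ) (hp : p.Prime) (hodd : Odd p) (hvt : 2 ≤ v ^ t)
    (hg : IsPrimitiveRoot (v : ZMod p) (p - 1))
    (hpqr : p = q * v ^ (t - 1) + r) (hr : r < v ^ (t - 1)) :
    ∀ nl nu : ℕ, nl + nu = v ^ t → nl * (q / v) + nu * (q / v + 1) = p - 1 →
      (0 < nl ∧
        (∃ z : Fin t → Fin v,
          ((Finset.range (p - 1)).filter (fun i =>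
            ∀ ι : Fin t, (v ^ ((i + (ι : ℕ)) % (p - 1)) % p) % v = (z ι : ℕ))).card = q / v) ∧
        (nu = 0 ↔ p % v ^ t = 1)) :=
  stmt_17_general p v t q r hp hvt hg hpqr hr
end
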